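/- arXiv:2311.08967 — 11 statements merged into one kernel-verified Lean document; each statement's English description precedes it below -/
import Mathlib

section
/- Let p ≥ 2 be a natural number, m ≥ 1, and let S ≥ m·p² and R be positive integers with gcd(R, S) = 1, and let R' satisfy R'·R ≡ 1 (mod S). Let a₁, …, a_m and c₁, …, c_m be natural numbers all strictly less than p. Then ((R' · (∑_{j=1}^m c_j · ((R · a_j) mod S))) mod S) mod p = (∑_{j=1}^m c_j · a_j) mod p. -/
/-! Reducing each ciphertext `R * a j` mod `S` does not change the weighted sum mod `S`, so
multiplying by `R'` gives back `∑ c j * a j` mod `S`. Since every term is below `p²`, this sum is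
below `m * p² ≤ S`, hence the reduction mod `S` returns the integer sum itself, and its residue
mod `p` is the one wanted. -/

theorem Nat.ModEq.mul_sum_mul_mod {ι : Type*} {S R R' : ℕ} (hinv : R' * R ≡ 1 [MOD S])
    (s : Finset ι) (a c : ι → ℕ) :
    R' * ∑ j ∈ s, c j * (R * a j % S) ≡ ∑ j ∈ s, c j * a j [MOD S] :=
  calc R' * ∑ j ∈ s, c j * (R * a j % S)
      ≡ R' * ∑ j ∈ s, c j * (R * a j) [MOD S] :=
        .mul_left _ (.sum fun j _ => .mul_left _ (Nat.mod_modEq _ _))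
    _ = R' * R * ∑ j ∈ s, c j * a j := by
        rw [mul_assoc, Finset.mul_sum s _ R]
        exact congrArg _ (Finset.sum_congr rfl fun j _ => by ring)
    _ ≡ 1 * ∑ j ∈ s, c j * a j [MOD S] := hinv.mul_right _
    _ = ∑ j ∈ s, c j * a j := one_mul _

theorem Finset.sum_mul_lt_card_mul_sq {ι : Type*} {s : Finset ι} (hs : s.Nonempty) {p : ℕ}
    {a c : ι → ℕ} (ha : ∀ j ∈ s, a j < p) (hc : ∀ j ∈ s, c j < p) :
    ∑ j ∈ s, c j * a j < s.card * p ^ 2 :=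
  calc ∑ j ∈ s, c j * a j < ∑ _j ∈ s, p ^ 2 :=
        Finset.sum_lt_sum_of_nonempty hs fun j hj =>
          (sq p).symm ▸ Nat.mul_lt_mul_of_lt_of_lt (hc j hj) (ha j hj)
    _ = s.card * p ^ 2 := by rw [Finset.sum_const, smul_eq_mul]

theorem stmt_2_general (p m S R R' : ℕ) (hm : 1 ≤ m)
    (hS : m * p ^ 2 ≤ S) (hinv : R' * R ≡ 1 [MOD S])
    (a c : Fin m → ℕ) (ha : ∀ j, a j < p) (hc : ∀ j, c j < p) :
    ((R' * ∑ j, c j * ((R * a j) % S)) % S) % p = (∑ j, c j * a j) % p := by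
  have hnonempty : (Finset.univ : Finset (Fin m)).Nonempty :=
    Finset.univ_nonempty_iff.mpr (Fin.pos_iff_nonempty.mp hm)
  have hlt : ∑ j, c j * a j < S := by
    have := Finset.sum_mul_lt_card_mul_sq hnonempty (fun j _ => ha j) (fun j _ => hc j)
    rw [Finset.card_univ, Fintype.card_fin] at this
    exact this.trans_le hS
  rw [hinv.mul_sum_mul_mod, Nat.mod_eq_of_lt hlt]

/-- Core decryption-correctness of HPPK over a hidden ring: with `S ≥ m·p²`,
decrypting a linear combination (with weights `c j < p`) of ciphertexts of
plaintexts `a j < p` and reducing mod `p` recovers the linear combination mod `p`. -/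
theorem stmt_2 (p m S R R' : ℕ) (hp : 2 ≤ p) (hm : 1 ≤ m)
    (hS : m * p ^ 2 ≤ S) (hSpos : 0 < S) (hRpos : 0 < R)
    (hgcd : Nat.gcd R S = 1) (hinv : R' * R ≡ 1 [MOD S])
    (a c : Fin m → ℕ) (ha : ∀ j, a j < p) (hc : ∀ j, c j < p) :
    ((R' * ∑ j, c j * ((R * a j) % S)) % S) % p = (∑ j, c j * a j) % p :=
  stmt_2_general p m S R R' hm hS hinv a c ha hc
end

section
/- Let n ≥ 1 and R ≥ n be natural numbers, and let a, b be natural numbers with a < n and b < n. Set μ = ⌊R·b / n⌋ and z = a·b − n·⌊a·μ / R⌋. Then z ≡ a·b (mod n), and either z = (a·b) mod n or z = ((a·b) mod n) + n; in particular 0 ≤ z < 2n. -/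
/-!
Write `q = ⌊a·μ/R⌋`. Since `μ ≤ R·b/n`, the quotient `q` never exceeds `a·b/n`; since
`μ > R·b/n - 1` and `a ≤ R`, it falls short of `a·b/n` by less than `1 + a/R ≤ 2`.
Hence `n·q ≤ a·b < n·q + 2n`, so `z = a·b - n·q` is a residue of `a·b` in `[0, 2n)`,
which leaves only the two values `a·b % n` and `a·b % n + n`.
-/

namespace Barrett

theorem mul_quotient_le (n R a b : ℕ) : n * (a * (R * b / n) / R) ≤ a * b := by
  rcases R.eq_zero_or_pos with rfl | hR
  · simp
  set μ := R * b / n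
  refine Nat.le_of_mul_le_mul_left ?_ hR
  calc R * (n * (a * μ / R)) = n * (R * (a * μ / R)) := by ring
    _ ≤ n * (a * μ) := Nat.mul_le_mul_left n (Nat.mul_div_le _ R)
    _ = a * (n * μ) := by ring
    _ ≤ a * (R * b) := Nat.mul_le_mul_left a (Nat.mul_div_le _ n)
    _ = R * (a * b) := by ring

theorem lt_mul_quotient_add_two_mul (n R a b : ℕ) (hn : 0 < n) (ha : a ≤ R) :
    a * b < n * (a * (R * b / n) / R) + 2 * n := by
  rcases R.eq_zero_or_pos with rfl | hR
  · obtain rfl : a = 0 := Nat.le_zero.mp ha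
    simpa using hn
  set μ := R * b / n
  set q := a * μ / R
  have hμ : n * μ + R * b % n = R * b := Nat.div_add_mod (R * b) n
  have hq : R * q + a * μ % R = a * μ := Nat.div_add_mod (a * μ) R
  have hr₁ : a * (R * b % n) < R * n :=
    lt_of_le_of_lt (Nat.mul_le_mul_right _ ha) (Nat.mul_lt_mul_of_pos_left (Nat.mod_lt _ hn) hR)
  have hr₂ : n * (a * μ % R) < R * n := by
    rw [mul_comm R]; exact Nat.mul_lt_mul_of_pos_left (Nat.mod_lt _ hR) hn
  refine Nat.lt_of_mul_lt_mul_left (a := R) ?_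
  calc R * (a * b) = a * (n * μ + R * b % n) := by rw [hμ]; ring
    _ = n * (R * q + a * μ % R) + a * (R * b % n) := by rw [hq]; ring
    _ = R * (n * q) + n * (a * μ % R) + a * (R * b % n) := by ring
    _ < R * (n * q) + R * n + R * n := by omega
    _ = R * (n * q + 2 * n) := by ring

end Barrett

theorem Nat.eq_mod_or_eq_mod_add_of_modEq_of_lt_two_mul {z c n : ℕ} (h : z ≡ c [MOD n])
    (hz : z < 2 * n) : z = c % n ∨ z = c % n + n := by
  have hdiv := Nat.div_add_mod z n
  have hlt : z / n < 2 := Nat.div_lt_of_lt_mul (by rwa [mul_comm])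
  rw [show z % n = c % n from h] at hdiv
  interval_cases z / n <;> omega

theorem stmt_3_general (n R a b : ℕ) (hR : n ≤ R) (ha : a < n) :
    let μ := R * b / n
    let z := a * b - n * (a * μ / R)
    z ≡ a * b [MOD n] ∧ (z = a * b % n ∨ z = a * b % n + n) ∧ z < 2 * n := by
  intro μ z
  have hle : n * (a * μ / R) ≤ a * b := Barrett.mul_quotient_le n R a b
  have hlt : a * b < n * (a * μ / R) + 2 * n :=
    Barrett.lt_mul_quotient_add_two_mul n R a b (by omega) (by omega)
  have hmod : z ≡ a * b [MOD n] := Nat.sub_mul_mod hle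
  have hz : z < 2 * n := by omega
  exact ⟨hmod, Nat.eq_mod_or_eq_mod_add_of_modEq_of_lt_two_mul hmod hz, hz⟩

/-- The Barrett reduction output `z = a·b − n·⌊a·μ/R⌋`, with `μ = ⌊R·b/n⌋` and `R ≥ n`,
is congruent to `a·b` modulo `n`, equals `(a·b) % n` or `(a·b) % n + n`, and lies in `[0, 2n)`. -/
theorem stmt_3 (n R a b : ℕ) (hn : 1 ≤ n) (hR : n ≤ R) (ha : a < n) (hb : b < n) :
    let μ := R * b / n
    let z := a * b - n * (a * μ / R)
    z ≡ a * b [MOD n] ∧ (z = a * b % n ∨ z = a * b % n + n) ∧ z < 2 * n :=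
  stmt_3_general n R a b hR ha
end

section
/- Let n ≥ 1 and R ≥ n be natural numbers, and let a, b be natural numbers with a < n and b < n. Then ⌊a·⌊R·b/n⌋ / R⌋ ≤ ⌊a·b / n⌋ ≤ ⌊a·⌊R·b/n⌋ / R⌋ + 1. -/
/-!
Write `R b = n μ + r` with `r < n`. Then `n R ⌊a b / n⌋ ≤ R a b = n a μ + a r < n (a μ + R)`
because `a ≤ R`, so `R ⌊a b / n⌋ ≤ a μ + R`, that is `⌊a b / n⌋ ≤ ⌊a μ / R⌋ + 1`.
Conversely `a ⌊R b / n⌋ ≤ ⌊a R b / n⌋`, and dividing the latter by `R` gives `⌊a b / n⌋`.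
-/

namespace Nat

theorem mul_div_div_le_mul_div (n R a b : ℕ) : a * (R * b / n) / R ≤ a * b / n := by
  rcases Nat.eq_zero_or_pos R with rfl | hR
  · simp
  calc a * (R * b / n) / R ≤ a * (R * b) / n / R :=
        Nat.div_le_div_right (Nat.mul_div_le_mul_div_assoc a (R * b) n)
    _ = a * b / n := by
        rw [Nat.div_div_eq_div_mul, mul_left_comm, mul_comm n R, Nat.mul_div_mul_left _ _ hR]

theorem mul_div_le_mul_div_div_add_one {n R a : ℕ} (b : ℕ) (hn : 0 < n) (haR : a ≤ R) :
    a * b / n ≤ a * (R * b / n) / R + 1 := by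
  rcases Nat.eq_zero_or_pos R with rfl | hR
  · simp [Nat.le_zero.mp haR]
  set μ := R * b / n
  set q := a * b / n
  have hq : n * q * R ≤ n * (a * μ) + a * (R * b % n) :=
    calc n * q * R ≤ a * b * R := Nat.mul_le_mul_right R (Nat.mul_div_le (a * b) n)
      _ = a * (n * μ + R * b % n) := by rw [Nat.div_add_mod]; ring
      _ = n * (a * μ) + a * (R * b % n) := by ring
  have hrem : a * (R * b % n) < n * R :=
    calc a * (R * b % n) ≤ R * (R * b % n) := Nat.mul_le_mul_right _ haR
      _ < R * n := Nat.mul_lt_mul_of_pos_left (Nat.mod_lt _ hn) hR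
      _ = n * R := mul_comm R n
  have hqR : q * R ≤ a * μ + R := by
    have : n * (q * R) < n * (a * μ + R) := by linarith
    exact (Nat.lt_of_mul_lt_mul_left this).le
  rw [← Nat.add_div_right _ hR]
  exact (Nat.le_div_iff_mul_le hR).mpr hqR

end Nat

theorem stmt_4_general (n R a b : ℕ) (hR : n ≤ R) (ha : a < n) :
    a * (R * b / n) / R ≤ a * b / n ∧ a * b / n ≤ a * (R * b / n) / R + 1 :=
  ⟨Nat.mul_div_div_le_mul_div n R a b,
    Nat.mul_div_le_mul_div_div_add_one b (Nat.zero_lt_of_lt ha) (ha.le.trans hR)⟩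

/-- Error bound for the Barrett approximate quotient: for `a, b < n ≤ R`,
the Barrett quotient `⌊a·⌊R·b/n⌋/R⌋` underestimates the true quotient `⌊a·b/n⌋` by at most 1. -/
theorem stmt_4 (n R a b : ℕ) (hn : 1 ≤ n) (hR : n ≤ R) (ha : a < n) (hb : b < n) :
    a * (R * b / n) / R ≤ a * b / n ∧ a * b / n ≤ a * (R * b / n) / R + 1 :=
  stmt_4_general n R a b hR ha
end

section
/- Let S and R be positive integers with S ≤ R, and let P be a natural number with P < S. Then ⌈S·⌊R·P/S⌋ / R⌉ = P. -/
/-! The Barrett quotient `q = ⌊R·P/S⌋` satisfies `R·P - S < S·q ≤ R·P`, so with `S ≤ R` the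
rational number `S·q / R` lies in `(P - 1, P]`, whose ceiling is `P`. -/

theorem Int.ceil_div_eq_of_lt_of_le {K : Type*} [Field K] [LinearOrder K] [IsStrictOrderedRing K]
    [FloorRing K] {x r : K} {p : ℤ} (hr : 0 < r) (hlt : r * (p - 1) < x) (hle : x ≤ r * p) :
    ⌈x / r⌉ = p := by
  rw [Int.ceil_eq_iff, lt_div_iff₀ hr, div_le_iff₀ hr, mul_comm _ r, mul_comm _ r]
  exact ⟨hlt, hle⟩

theorem Nat.lt_mul_div_add_of_le {n S R : ℕ} (hS : 0 < S) (hSR : S ≤ R) :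
    n < S * (n / S) + R :=
  calc n = S * (n / S) + n % S := (Nat.div_add_mod n S).symm
    _ < S * (n / S) + R := Nat.add_lt_add_left ((Nat.mod_lt n hS).trans_le hSR) _

theorem stmt_5_general (S R P : ℕ) (hS : 0 < S) (hSR : S ≤ R) :
    ⌈((S * (R * P / S) : ℕ) : ℚ) / (R : ℚ)⌉ = (P : ℤ) := by
  have hR : (0 : ℚ) < R := by exact_mod_cast hS.trans_le hSR
  have hlt : R * P < S * (R * P / S) + R := Nat.lt_mul_div_add_of_le hS hSR
  have hle : S * (R * P / S) ≤ R * P := Nat.mul_div_le (R * P) S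
  refine Int.ceil_div_eq_of_lt_of_le hR ?_ ?_ <;> rw [Int.cast_natCast]
  · have : (R : ℚ) * P < S * (R * P / S : ℕ) + R := by exact_mod_cast hlt
    push_cast
    linarith
  · exact_mod_cast hle

/-- Recovery of a hidden-ring coefficient from its Barrett parameter: for `P < S ≤ R`,
one has `⌈S·⌊R·P/S⌋ / R⌉ = P`. -/
theorem stmt_5 (S R P : ℕ) (hS : 0 < S) (hR : 0 < R) (hSR : S ≤ R) (hP : P < S) :
    ⌈((S * (R * P / S) : ℕ) : ℚ) / (R : ℚ)⌉ = (P : ℤ) :=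
  stmt_5_general S R P hS hSR
end

section
/- Let p be a prime, and let f, h, B be univariate polynomials over F_p. Set P = f·B and Q = h·B, and let x₀ ∈ F_p satisfy h(x₀)·B(x₀) ≠ 0. Define the ciphertext values P̄ = P(x₀) − P₀ and Q̄ = Q(x₀) − Q₀, where P₀ = f₀·B₀ and Q₀ = h₀·B₀ are the constant coefficients of P and Q (f₀, h₀, B₀ denoting the constant coefficients of f, h, B). Then k := (P̄ + f₀·B₀)·(Q̄ + h₀·B₀)⁻¹ equals f(x₀)·h(x₀)⁻¹, and consequently f(x₀) − k·h(x₀) = 0 in F_p. -/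
/-- DPPK decryption correctness: with `P = f·B`, `Q = h·B` over `F_p` and
`h(x₀)·B(x₀) ≠ 0`, the value `k = (P̄ + f₀B₀)·(Q̄ + h₀B₀)⁻¹` equals `f(x₀)·h(x₀)⁻¹`,
so `f(x₀) − k·h(x₀) = 0`. -/
theorem stmt_6 (p : ℕ) [Fact p.Prime] (f h B : Polynomial (ZMod p)) (x₀ : ZMod p)
    (hne : h.eval x₀ * B.eval x₀ ≠ 0) :
    let P := f * B
    let Q := h * B
    let Pbar := P.eval x₀ - f.coeff 0 * B.coeff 0
    let Qbar := Q.eval x₀ - h.coeff 0 * B.coeff 0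
    let k := (Pbar + f.coeff 0 * B.coeff 0) * (Qbar + h.coeff 0 * B.coeff 0)⁻¹
    k = f.eval x₀ * (h.eval x₀)⁻¹ ∧ f.eval x₀ - k * h.eval x₀ = 0 := by
  intro P Q Pbar Qbar k
  have hh : h.eval x₀ ≠ 0 := fun h0 => hne (by rw [h0, zero_mul])
  have hB : B.eval x₀ ≠ 0 := fun h0 => hne (by rw [h0, mul_zero])
  have hk : k = f.eval x₀ * (h.eval x₀)⁻¹ := by
    show ((f*B).eval x₀ - f.coeff 0 * B.coeff 0 + f.coeff 0 * B.coeff 0) *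
      ((h*B).eval x₀ - h.coeff 0 * B.coeff 0 + h.coeff 0 * B.coeff 0)⁻¹ = _
    simp only [sub_add_cancel, Polynomial.eval_mul, mul_inv]
    field_simp
  refine ⟨hk, ?_⟩
  rw [hk]
  field_simp
  simp
end

section
/- Let p be a prime. Let f = ∑_{s=0}^{λ} f_s x^s and h = ∑_{s=0}^{λ} h_s x^s be univariate polynomials of degree at most λ over F_p, and let B(x, u₁, …, u_m) = ∑_{t=0}^{n} B_t(u₁, …, u_m)·x^t, where each B_t is a polynomial over F_p in the noise variables u₁, …, u_m. Set P = f·B and Q = h·B. Fix x₀, and values u⃗ = (u₁, …, u_m) in F_p with h(x₀) ≠ 0 and B(x₀, u⃗) ≠ 0, and fix nonzero R₀, R_n ∈ F_p. Define the ciphertext values P̄ = P(x₀, u⃗) − f₀·B₀(u⃗) − f_λ·B_n(u⃗)·x₀^{n+λ}, Q̄ = Q(x₀, u⃗) − h₀·B₀(u⃗) − h_λ·B_n(u⃗)·x₀^{n+λ}, N̄₀ = R₀·B₀(u⃗), and N̄_n = R_n·B_n(u⃗)·x₀^{n+λ}. Then (P̄ + f₀·R₀⁻¹·N̄₀ + f_λ·R_n⁻¹·N̄_n)·(Q̄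 + h₀·R₀⁻¹·N̄₀ + h_λ·R_n⁻¹·N̄_n)⁻¹ = f(x₀)·h(x₀)⁻¹ in F_p. -/
/-- MPPK KEM decryption correctness over `F_p`: reconstructing `P(x₀,u⃗)` and
`Q(x₀,u⃗)` from the ciphertext values `P̄, Q̄, N̄₀, N̄ₙ` using `f₀, h₀, f_λ, h_λ, R₀, Rₙ`
and forming their ratio recovers `f(x₀)·h(x₀)⁻¹`. -/
theorem stmt_7 (p : ℕ) [Fact p.Prime] (lam n m : ℕ)
    (fc hc : Fin (lam + 1) → ZMod p)
    (Bc : Fin (n + 1) → MvPolynomial (Fin m) (ZMod p))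
    (x₀ : ZMod p) (u : Fin m → ZMod p) (R₀ Rn : ZMod p)
    (hR₀ : R₀ ≠ 0) (hRn : Rn ≠ 0) :
    let Bv : Fin (n + 1) → ZMod p := fun t => MvPolynomial.eval u (Bc t)
    let fx : ZMod p := ∑ s, fc s * x₀ ^ (s : ℕ)
    let hx : ZMod p := ∑ s, hc s * x₀ ^ (s : ℕ)
    let Bx : ZMod p := ∑ t, Bv t * x₀ ^ (t : ℕ)
    hx ≠ 0 → Bx ≠ 0 →
    let Pbar := fx * Bx - fc 0 * Bv 0 - fc (Fin.last lam) * Bv (Fin.last n) * x₀ ^ (n + lam)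
    let Qbar := hx * Bx - hc 0 * Bv 0 - hc (Fin.last lam) * Bv (Fin.last n) * x₀ ^ (n + lam)
    let N₀ := R₀ * Bv 0
    let Nn := Rn * Bv (Fin.last n) * x₀ ^ (n + lam)
    (Pbar + fc 0 * R₀⁻¹ * N₀ + fc (Fin.last lam) * Rn⁻¹ * Nn) *
        (Qbar + hc 0 * R₀⁻¹ * N₀ + hc (Fin.last lam) * Rn⁻¹ * Nn)⁻¹ =
      fx * hx⁻¹ := by
  intro Bv fx hx Bx hhx hBx Pbar Qbar N₀ Nn
  have e1 : fc 0 * R₀⁻¹ * N₀ = fc 0 * Bv 0 := by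
    simp only [N₀]; field_simp
  have e2 : hc 0 * R₀⁻¹ * N₀ = hc 0 * Bv 0 := by
    simp only [N₀]; field_simp
  have e3 : fc (Fin.last lam) * Rn⁻¹ * Nn
      = fc (Fin.last lam) * Bv (Fin.last n) * x₀ ^ (n + lam) := by
    simp only [Nn]; field_simp
  have e4 : hc (Fin.last lam) * Rn⁻¹ * Nn
      = hc (Fin.last lam) * Bv (Fin.last n) * x₀ ^ (n + lam) := by
    simp only [Nn]; field_simp
  simp only [Pbar, Qbar, e1, e2, e3, e4]
  ring_nf
  rw [mul_assoc fx Bx, mul_inv_cancel₀ hBx, mul_one]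
end

section
/- Let p be a prime. Let f = ∑_{s=0}^{λ} f_s x^s and h = ∑_{s=0}^{λ} h_s x^s be univariate polynomials of degree at most λ over F_p, and let B(x, u₁, …, u_m) = ∑_{t=0}^{n} B_t(u₁, …, u_m)·x^t with each B_t a polynomial over F_p in u₁, …, u_m. Set N = n + λ, P = f·B = ∑_{i=0}^{N} P_i(u⃗)·x^i, Q = h·B = ∑_{i=0}^{N} Q_i(u⃗)·x^i, and define the truncated polynomials P' = P − P₀(u⃗) − P_N(u⃗)·x^N and Q' = Q − Q₀(u⃗) − Q_N(u⃗)·x^N. Define s₀(x) = f₀·h(x) − h₀·f(x) and s_N(x) = f_λ·h(x) − h_λ·f(x). Then the polynomial identity f(x)·Q'(x, u⃗) = h(x)·P'(x, u⃗) + s₀(x)·B₀(u⃗) + s_N(x)·B_n(u⃗)·x^N holds over F_p. -/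
open Polynomial

lemma aux_coeff {R : Type*} [CommRing R] (d : ℕ) (a : Fin (d+1) → R) (k : ℕ) :
    (∑ s : Fin (d+1), C (a s) * X ^ (s : ℕ)).coeff k =
      if h : k < d + 1 then a ⟨k, h⟩ else 0 := by
  rw [finset_sum_coeff]
  simp only [coeff_C_mul, coeff_X_pow, mul_ite, mul_one, mul_zero]
  split
  · next h =>
    rw [Finset.sum_eq_single (⟨k, h⟩ : Fin (d+1))]
    · simp
    · intro b _ hb
      simp only [ite_eq_right_iff]
      intro hk; exact absurd (Fin.ext hk.symm) hb
    · simp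
  · next h =>
    apply Finset.sum_eq_zero
    intro b _
    simp only [ite_eq_right_iff]
    exact fun hk => absurd (hk ▸ b.isLt) h

lemma aux_natDeg {R : Type*} [CommRing R] (d : ℕ) (a : Fin (d+1) → R) :
    (∑ s : Fin (d+1), C (a s) * X ^ (s : ℕ)).natDegree ≤ d := by
  rw [natDegree_le_iff_coeff_eq_zero]
  intro k hk
  rw [aux_coeff]
  rw [dif_neg (by omega)]

/-- The MPPK DS polynomial identity over `F_p`:
`f·Q' = h·P' + s₀·B₀ + s_N·B_n·xᴺ`, where `P' , Q'` are the products `f·B, h·B`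
with constant-in-`x` and degree-`N`-in-`x` terms removed, `N = n + λ`,
`s₀ = f₀·h − h₀·f` and `s_N = f_λ·h − h_λ·f`. -/
theorem stmt_8 (p : ℕ) [Fact p.Prime] (lam n m : ℕ)
    (fc hc : Fin (lam + 1) → ZMod p)
    (Bc : Fin (n + 1) → MvPolynomial (Fin m) (ZMod p)) :
    let N := n + lam
    let f : Polynomial (MvPolynomial (Fin m) (ZMod p)) :=
      ∑ s : Fin (lam + 1), C (MvPolynomial.C (fc s)) * X ^ (s : ℕ)
    let h : Polynomial (MvPolynomial (Fin m) (ZMod p)) :=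
      ∑ s : Fin (lam + 1), C (MvPolynomial.C (hc s)) * X ^ (s : ℕ)
    let B : Polynomial (MvPolynomial (Fin m) (ZMod p)) :=
      ∑ t : Fin (n + 1), C (Bc t) * X ^ (t : ℕ)
    let P := f * B
    let Q := h * B
    let P' := P - C (P.coeff 0) - C (P.coeff N) * X ^ N
    let Q' := Q - C (Q.coeff 0) - C (Q.coeff N) * X ^ N
    let s0 := C (MvPolynomial.C (fc 0)) * h - C (MvPolynomial.C (hc 0)) * f
    let sN := C (MvPolynomial.C (fc (Fin.last lam))) * h -
      C (MvPolynomial.C (hc (Fin.last lam))) * f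
    f * Q' = h * P' + s0 * C (Bc 0) + sN * C (Bc (Fin.last n)) * X ^ N := by
  intro N f h B P Q P' Q' s0 sN
  have hf0 : f.coeff 0 = MvPolynomial.C (fc 0) := by
    rw [show f.coeff 0 = _ from aux_coeff lam _ 0, dif_pos (Nat.succ_pos _)]; rfl
  have hh0 : h.coeff 0 = MvPolynomial.C (hc 0) := by
    rw [show h.coeff 0 = _ from aux_coeff lam _ 0, dif_pos (Nat.succ_pos _)]; rfl
  have hB0 : B.coeff 0 = Bc 0 := by
    rw [show B.coeff 0 = _ from aux_coeff n _ 0, dif_pos (Nat.succ_pos _)]; rfl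
  have hfl : f.coeff lam = MvPolynomial.C (fc (Fin.last lam)) := by
    rw [show f.coeff lam = _ from aux_coeff lam _ lam, dif_pos (Nat.lt_succ_self _)]; rfl
  have hhl : h.coeff lam = MvPolynomial.C (hc (Fin.last lam)) := by
    rw [show h.coeff lam = _ from aux_coeff lam _ lam, dif_pos (Nat.lt_succ_self _)]; rfl
  have hBn : B.coeff n = Bc (Fin.last n) := by
    rw [show B.coeff n = _ from aux_coeff n _ n, dif_pos (Nat.lt_succ_self _)]; rfl
  have hP0 : P.coeff 0 = MvPolynomial.C (fc 0) * Bc 0 := by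
    rw [show P.coeff 0 = f.coeff 0 * B.coeff 0 from mul_coeff_zero f B, hf0, hB0]
  have hQ0 : Q.coeff 0 = MvPolynomial.C (hc 0) * Bc 0 := by
    rw [show Q.coeff 0 = h.coeff 0 * B.coeff 0 from mul_coeff_zero h B, hh0, hB0]
  have hPN : P.coeff N = MvPolynomial.C (fc (Fin.last lam)) * Bc (Fin.last n) := by
    rw [show N = lam + n from by omega,
      coeff_mul_add_eq_of_natDegree_le (aux_natDeg lam _) (aux_natDeg n _), hfl, hBn]
  have hQN : Q.coeff N = MvPolynomial.C (hc (Fin.last lam)) * Bc (Fin.last n) := by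
    rw [show N = lam + n from by omega,
      coeff_mul_add_eq_of_natDegree_le (aux_natDeg lam _) (aux_natDeg n _), hhl, hBn]
  have key : f * Q = h * P := by rw [show Q = h * B from rfl, show P = f * B from rfl]; ring
  show f * (Q - C (Q.coeff 0) - C (Q.coeff N) * X ^ N) =
    h * (P - C (P.coeff 0) - C (P.coeff N) * X ^ N) + s0 * C (Bc 0) +
      sN * C (Bc (Fin.last n)) * X ^ N
  rw [hP0, hQ0, hPN, hQN]
  simp only [map_mul, s0, sN]
  linear_combination key
end

section
/- Let p be a prime and g an integer with p ∤ g. Let f = ∑_{s=0}^{λ} f_s x^s and h = ∑_{s=0}^{λ} h_s x^s have integer coefficients, let B(x, u₁, …, u_m) = ∑_{t=0}^{n} B_t(u₁, …, u_m)·x^t with each B_t an integer-coefficient polynomial in u₁, …, u_m, and set N = n+λ, P = f·B, Q = h·B, P' = P − P₀(u⃗) − P_N(u⃗)·x^N, Q' = Q − Q₀(u⃗) − Q_N(u⃗)·x^N (removing the constant-in-x and degree-N-in-x terms), s₀(x) = f₀·h(x) − h₀·f(x), and s_N(x) = f_λ·h(x) − h_λ·f(x). Then for all integers x₀, u₁,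 …, u_m one has the congruence (g^{f(x₀)})^{Q'(x₀,u⃗)} ≡ (g^{h(x₀)})^{P'(x₀,u⃗)} · (g^{s₀(x₀)})^{B₀(u⃗)} · (g^{s_N(x₀)})^{B_n(u⃗)·x₀^N} (mod p), where all polynomial values are evaluated over the integers (with negative exponents interpreted via multiplication by the modular inverse of g modulo p, or equivalently the exponents reduced modulo p−1). -/
/-!
Raising `g` to an integer exponent turns sums of exponents into products, so the congruence is
`g` raised to the two sides of the exponent identity `f Q' = h P' + s₀ B₀ + s_N B_n x^N`. That
identity is pure algebra: expanding `P' = f B - f₀ B₀ - f_λ B_n x^N` and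
`Q' = h B - h₀ B₀ - h_λ B_n x^N`, the terms `f h B` cancel and what remains regroups into
`s₀ B₀ + s_N B_n x^N`. In particular it holds for arbitrary values of `f, h, B`, not only for
evaluations of polynomials, and needs no reduction of exponents modulo `p - 1`.
-/

theorem mul_sub_sub_eq_mul_sub_sub_add {R : Type*} [CommRing R] (f h B f₀ h₀ f₁ h₁ B₀ C : R) :
    f * (h * B - h₀ * B₀ - h₁ * C) =
      h * (f * B - f₀ * B₀ - f₁ * C) + (f₀ * h - h₀ * f) * B₀ + (f₁ * h - h₁ * f) * C := by
  ring

theorem zpow_zpow_eq_of_mul_eq {G₀ : Type*} [GroupWithZero G₀] {a : G₀} (ha : a ≠ 0)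
    {e₁ e₂ e₃ e₄ e₅ e₆ e₇ e₈ : ℤ} (he : e₁ * e₂ = e₃ * e₄ + e₅ * e₆ + e₇ * e₈) :
    (a ^ e₁) ^ e₂ = (a ^ e₃) ^ e₄ * (a ^ e₅) ^ e₆ * (a ^ e₇) ^ e₈ := by
  simp only [← zpow_mul, ← zpow_add₀ ha, he]

/-- The MPPK DS verification congruence: for a prime `p` and a base `g` with `p ∤ g`,
`(g^{f(x₀)})^{Q'(x₀,u⃗)} ≡ (g^{h(x₀)})^{P'(x₀,u⃗)} · (g^{s₀(x₀)})^{B₀(u⃗)} ·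
(g^{s_N(x₀)})^{B_n(u⃗)·x₀^N} (mod p)`, with integer exponents interpreted via `zpow`
in `ZMod p` (negative powers use the modular inverse of `g`). -/
theorem stmt_9 (p : ℕ) [Fact p.Prime] (g : ℤ) (hg : ¬ (p : ℤ) ∣ g)
    (lam n m : ℕ) (fc hc : Fin (lam + 1) → ℤ)
    (Bc : Fin (n + 1) → MvPolynomial (Fin m) ℤ)
    (x₀ : ℤ) (u : Fin m → ℤ) :
    let N := n + lam
    let Bv : Fin (n + 1) → ℤ := fun t => MvPolynomial.eval u (Bc t)
    let fx : ℤ := ∑ s, fc s * x₀ ^ (s : ℕ)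
    let hx : ℤ := ∑ s, hc s * x₀ ^ (s : ℕ)
    let Bx : ℤ := ∑ t, Bv t * x₀ ^ (t : ℕ)
    let P' : ℤ := fx * Bx - fc 0 * Bv 0 - fc (Fin.last lam) * Bv (Fin.last n) * x₀ ^ N
    let Q' : ℤ := hx * Bx - hc 0 * Bv 0 - hc (Fin.last lam) * Bv (Fin.last n) * x₀ ^ N
    let s0 : ℤ := fc 0 * hx - hc 0 * fx
    let sN : ℤ := fc (Fin.last lam) * hx - hc (Fin.last lam) * fx
    ((g : ZMod p) ^ fx) ^ Q' =
      ((g : ZMod p) ^ hx) ^ P' * ((g : ZMod p) ^ s0) ^ (Bv 0) *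
        ((g : ZMod p) ^ sN) ^ (Bv (Fin.last n) * x₀ ^ N) := by
  intro N Bv fx hx Bx P' Q' s0 sN
  have hg₀ : (g : ZMod p) ≠ 0 := by
    rwa [Ne, ZMod.intCast_zmod_eq_zero_iff_dvd]
  apply zpow_zpow_eq_of_mul_eq hg₀
  simp only [P', Q', s0, sN, mul_assoc]
  exact mul_sub_sub_eq_mul_sub_sub_add fx hx Bx (fc 0) (hc 0) (fc (Fin.last lam)) (hc (Fin.last lam))
    (Bv 0) (Bv (Fin.last n) * x₀ ^ N)
end

section
/- Let p ≥ 2 be a natural number, and let S ≥ p² and R be positive integers with gcd(R, S) = 1; let R' satisfy R'·R ≡ 1 (mod S). Let a and c be natural numbers with a < p and c < p, and set the encrypted coefficient A = (R·a) mod S and the signature element H = (R'·c) mod S. Then ((H·A) mod S) mod p = (c·a) mod p. -/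
/-! Multiplying the masked values cancels the masks, since `R' * R ≡ 1 (mod S)`, so
`H * A ≡ c * a (mod S)`; as `c * a < p² ≤ S`, reducing modulo `S` returns `c * a` itself. -/

theorem Nat.ModEq.mul_mul_of_mul_modEq_one {S R R' : ℕ} (h : R' * R ≡ 1 [MOD S]) (c a : ℕ) :
    R' * c * (R * a) ≡ c * a [MOD S] :=
  calc R' * c * (R * a) = R' * R * (c * a) := by ring
    _ ≡ 1 * (c * a) [MOD S] := h.mul_right _
    _ = c * a := one_mul _

theorem stmt_10_general (p S R R' a c : ℕ) (hS : p ^ 2 ≤ S)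
    (hinv : R' * R ≡ 1 [MOD S])
    (ha : a < p) (hc : c < p) :
    ((((R' * c) % S) * ((R * a) % S)) % S) % p = (c * a) % p := by
  have hunmask : ((R' * c) % S) * ((R * a) % S) % S = c * a % S := by
    rw [← Nat.mul_mod]
    exact hinv.mul_mul_of_mul_modEq_one c a
  have hca : c * a < S := (sq p ▸ Nat.mul_lt_mul'' hc ha).trans_le hS
  rw [hunmask, Nat.mod_eq_of_lt hca]

/-- HPPK DS coefficient recovery: with `S ≥ p²`, `A = (R·a) % S` the encrypted
coefficient and `H = (R'·c) % S` the signature element (`R'` the inverse of `R` mod `S`),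
one has `((H·A) % S) % p = (c·a) % p`. -/
theorem stmt_10 (p S R R' a c : ℕ) (hp : 2 ≤ p) (hS : p ^ 2 ≤ S) (hSpos : 0 < S)
    (hRpos : 0 < R) (hgcd : Nat.gcd R S = 1) (hinv : R' * R ≡ 1 [MOD S])
    (ha : a < p) (hc : c < p) :
    ((((R' * c) % S) * ((R * a) % S)) % S) % p = (c * a) % p :=
  stmt_10_general p S R R' a c hS hinv ha hc
end

section
/- Let p ≥ 2, λ, n, m be natural numbers with m ≥ 1. Let f₀, …, f_λ, h₀, …, h_λ and B_{t,j} (0 ≤ t ≤ n, 1 ≤ j ≤ m) be natural numbers all strictly less than p, and define for 0 ≤ i ≤ n+λ and 1 ≤ j ≤ m the product coefficients p_{ij} = (∑_{s+t=i} f_s·B_{t,j}) mod p and q_{ij} = (∑_{s+t=i} h_s·B_{t,j}) mod p. Let S₁ ≥ p² and S₂ ≥ p² be positive integers, R₁ coprime to S₁ and R₂ coprime to S₂, with modular inverses R₁' mod S₁ and R₂' mod S₂, and set the public encrypted coefficients P_{ij} = (R₁·p_{ij}) mod S₁ and Q_{ij} = (R₂·q_{ij}) mod S₂. Fix natural numbers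 x₀ < p and α < p, and define the signature elements F = (R₂'·((α·∑_{s=0}^{λ} f_s·x₀^s) mod p)) mod S₂ and H = (R₁'·((α·∑_{s=0}^{λ} h_s·x₀^s) mod p)) mod S₁. Then for all natural numbers u₁, …, u_m: ∑_{j=1}^{m} ∑_{i=0}^{n+λ} (((F·Q_{ij}) mod S₂) mod p)·x₀^i·u_j ≡ ∑_{j=1}^{m} ∑_{i=0}^{n+λ} (((H·P_{ij}) mod S₁) mod p)·x₀^i·u_j (mod p). -/
/-!
Decryption cancels encryption exactly: for `a, b < p` the product `a * b` is below `p² ≤ S`, so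
`(R⁻¹ a mod S) · (R b mod S) mod S` is the integer `a * b` itself, not just its class mod `S`.
Hence each verification term `(F · Q_{ij} mod S₂) mod p` is `α f(x₀) q_{ij}` in `ZMod p`, and
summing against `x₀^i` evaluates the product `h B_j` at `x₀`. Both sides therefore equal
`α f(x₀) h(x₀) ∑_j B_j(x₀) u_j`.
-/

open Finset

lemma mul_mod_mul_mod_of_modEq_one {S R R' a b : ℕ} (hinv : R' * R ≡ 1 [MOD S])
    (hab : a * b < S) : (R' * a % S) * (R * b % S) % S = a * b :=
  calc (R' * a % S) * (R * b % S) % S = (R' * R) * (a * b) % S := by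
        rw [← Nat.mul_mod, mul_mul_mul_comm]
    _ = 1 * (a * b) % S := Nat.ModEq.mul_right _ hinv
    _ = a * b := by rw [one_mul, Nat.mod_eq_of_lt hab]

lemma mod_mul_mod_lt_of_sq_le {p S : ℕ} (hp : 0 < p) (hS : p ^ 2 ≤ S) (a b : ℕ) :
    a % p * (b % p) < S :=
  (Nat.mul_lt_mul'' (Nat.mod_lt a hp) (Nat.mod_lt b hp)).trans_le (sq p ▸ hS)

lemma sum_range_convolution_mul_pow {R : Type*} [CommSemiring R] (L N : ℕ)
    (a : Fin (L + 1) → R) (b : Fin (N + 1) → R) (x : R) :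
    ∑ i ∈ range (N + L + 1),
        (∑ s : Fin (L + 1), ∑ t : Fin (N + 1), if (s : ℕ) + t = i then a s * b t else 0) * x ^ i
      = (∑ s : Fin (L + 1), a s * x ^ (s : ℕ)) * ∑ t : Fin (N + 1), b t * x ^ (t : ℕ) := by
  rw [sum_mul_sum]
  simp only [sum_mul, ite_mul, zero_mul]
  rw [sum_comm]
  refine sum_congr rfl fun s _ => ?_
  rw [sum_comm]
  refine sum_congr rfl fun t _ => ?_
  rw [sum_ite_eq, if_pos (mem_range.mpr (by omega)), pow_add]
  ring

lemma sum_range_mul_convolution_mul_pow_mul {R : Type*} [CommSemiring R] (L N : ℕ)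
    (a : Fin (L + 1) → R) (b : Fin (N + 1) → R) (c d x : R) :
    ∑ i ∈ range (N + L + 1),
        c * (∑ s : Fin (L + 1), ∑ t : Fin (N + 1), if (s : ℕ) + t = i then a s * b t else 0)
          * x ^ i * d
      = c * d * ((∑ s : Fin (L + 1), a s * x ^ (s : ℕ)) * ∑ t : Fin (N + 1), b t * x ^ (t : ℕ)) := by
  rw [← sum_range_convolution_mul_pow, mul_sum]
  exact sum_congr rfl fun i _ => by ring

theorem stmt_11_general (p lam n m : ℕ) (hp : 2 ≤ p)
    (fc hc : Fin (lam + 1) → ℕ) (Bc : Fin (n + 1) → Fin m → ℕ)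
    (S₁ S₂ R₁ R₂ R₁' R₂' : ℕ)
    (hS₁ : p ^ 2 ≤ S₁) (hS₂ : p ^ 2 ≤ S₂)
    (hi₁ : R₁' * R₁ ≡ 1 [MOD S₁]) (hi₂ : R₂' * R₂ ≡ 1 [MOD S₂])
    (x₀ α : ℕ) :
    let pij : ℕ → Fin m → ℕ := fun i j =>
      (∑ s : Fin (lam + 1), ∑ t : Fin (n + 1),
        if (s : ℕ) + (t : ℕ) = i then fc s * Bc t j else 0) % p
    let qij : ℕ → Fin m → ℕ := fun i j =>
      (∑ s : Fin (lam + 1), ∑ t : Fin (n + 1),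
        if (s : ℕ) + (t : ℕ) = i then hc s * Bc t j else 0) % p
    let Pij : ℕ → Fin m → ℕ := fun i j => (R₁ * pij i j) % S₁
    let Qij : ℕ → Fin m → ℕ := fun i j => (R₂ * qij i j) % S₂
    let F := (R₂' * ((α * ∑ s : Fin (lam + 1), fc s * x₀ ^ (s : ℕ)) % p)) % S₂
    let H := (R₁' * ((α * ∑ s : Fin (lam + 1), hc s * x₀ ^ (s : ℕ)) % p)) % S₁
    ∀ u : Fin m → ℕ,
      (∑ j, ∑ i ∈ Finset.range (n + lam + 1),
          (((F * Qij i j) % S₂) % p) * x₀ ^ i * u j) ≡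
        (∑ j, ∑ i ∈ Finset.range (n + lam + 1),
          (((H * Pij i j) % S₁) % p) * x₀ ^ i * u j) [MOD p] := by
  intro pij qij Pij Qij F H u
  have hp0 : 0 < p := by omega
  have hQ (i j) : F * Qij i j % S₂ = (α * ∑ s, fc s * x₀ ^ (s : ℕ)) % p * qij i j :=
    mul_mod_mul_mod_of_modEq_one hi₂ (mod_mul_mod_lt_of_sq_le hp0 hS₂ _ _)
  have hP (i j) : H * Pij i j % S₁ = (α * ∑ s, hc s * x₀ ^ (s : ℕ)) % p * pij i j :=
    mul_mod_mul_mod_of_modEq_one hi₁ (mod_mul_mod_lt_of_sq_le hp0 hS₁ _ _)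
  rw [← ZMod.natCast_eq_natCast_iff]
  simp only [hQ, hP, pij, qij]
  push_cast [ZMod.natCast_mod]
  refine sum_congr rfl fun j _ => ?_
  rw [sum_range_mul_convolution_mul_pow_mul, sum_range_mul_convolution_mul_pow_mul]
  ring

/-- HPPK DS verification correctness: honestly generated signatures `F, H` always
pass the verification equation
`∑ᵢⱼ ((F·Q_{ij} mod S₂) mod p)·x₀^i·u_j ≡ ∑ᵢⱼ ((H·P_{ij} mod S₁) mod p)·x₀^i·u_j (mod p)`. -/
theorem stmt_11 (p lam n m : ℕ) (hp : 2 ≤ p) (hm : 1 ≤ m)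
    (fc hc : Fin (lam + 1) → ℕ) (Bc : Fin (n + 1) → Fin m → ℕ)
    (hfc : ∀ s, fc s < p) (hhc : ∀ s, hc s < p) (hBc : ∀ t j, Bc t j < p)
    (S₁ S₂ R₁ R₂ R₁' R₂' : ℕ)
    (hS₁ : p ^ 2 ≤ S₁) (hS₂ : p ^ 2 ≤ S₂) (hS₁pos : 0 < S₁) (hS₂pos : 0 < S₂)
    (hg₁ : Nat.gcd R₁ S₁ = 1) (hg₂ : Nat.gcd R₂ S₂ = 1)
    (hi₁ : R₁' * R₁ ≡ 1 [MOD S₁]) (hi₂ : R₂' * R₂ ≡ 1 [MOD S₂])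
    (x₀ α : ℕ) (hx₀ : x₀ < p) (hα : α < p) :
    let pij : ℕ → Fin m → ℕ := fun i j =>
      (∑ s : Fin (lam + 1), ∑ t : Fin (n + 1),
        if (s : ℕ) + (t : ℕ) = i then fc s * Bc t j else 0) % p
    let qij : ℕ → Fin m → ℕ := fun i j =>
      (∑ s : Fin (lam + 1), ∑ t : Fin (n + 1),
        if (s : ℕ) + (t : ℕ) = i then hc s * Bc t j else 0) % p
    let Pij : ℕ → Fin m → ℕ := fun i j => (R₁ * pij i j) % S₁
    let Qij : ℕ → Fin m → ℕ := fun i j => (R₂ * qij i j) % S₂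
    let F := (R₂' * ((α * ∑ s : Fin (lam + 1), fc s * x₀ ^ (s : ℕ)) % p)) % S₂
    let H := (R₁' * ((α * ∑ s : Fin (lam + 1), hc s * x₀ ^ (s : ℕ)) % p)) % S₁
    ∀ u : Fin m → ℕ,
      (∑ j, ∑ i ∈ Finset.range (n + lam + 1),
          (((F * Qij i j) % S₂) % p) * x₀ ^ i * u j) ≡
        (∑ j, ∑ i ∈ Finset.range (n + lam + 1),
          (((H * Pij i j) % S₁) % p) * x₀ ^ i * u j) [MOD p] :=
  stmt_11_general p lam n m hp fc hc Bc S₁ S₂ R₁ R₂ R₁' R₂' hS₁ hS₂ hi₁ hi₂ x₀ α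
end

section
/- Let p ≥ 2, λ, n, m be natural numbers with m ≥ 1, and let S be a positive integer with S > m·(n+λ+1)·p². Let R be coprime to S with modular inverse R' mod S. Let a_{ij} (0 ≤ i ≤ n+λ, 1 ≤ j ≤ m) be natural numbers all strictly less than p, and set the encrypted coefficients A_{ij} = (R·a_{ij}) mod S. Then for all natural numbers x₀ < p and u₁, …, u_m < p: ((R' · (∑_{j=1}^{m} ∑_{i=0}^{n+λ} A_{ij}·((x₀^i·u_j) mod p))) mod S) mod p = (∑_{j=1}^{m} ∑_{i=0}^{n+λ} a_{ij}·x₀^i·u_j) mod p. -/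
private lemma sum_mod_congr {ι : Type*} (s : Finset ι) (f g : ι → ℕ) (n : ℕ)
    (h : ∀ i ∈ s, f i % n = g i % n) :
    (∑ i ∈ s, f i) % n = (∑ i ∈ s, g i) % n := by
  rw [Finset.sum_nat_mod, Finset.sum_congr rfl h, ← Finset.sum_nat_mod]

/-- HPPK KEM decryption correctness over a hidden ring: with `S > m·(n+λ+1)·p²`,
decrypting the evaluated cipher polynomial `∑ᵢⱼ A_{ij}·((x₀^i·u_j) mod p)` with the
inverse `R'` of `R` modulo `S` and reducing mod `p` recovers the plaintext polynomial
value `∑ᵢⱼ a_{ij}·x₀^i·u_j mod p`. -/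
theorem stmt_13 (p lam n m S R R' : ℕ) (hp : 2 ≤ p) (hm : 1 ≤ m)
    (hSpos : 0 < S) (hS : m * (n + lam + 1) * p ^ 2 < S)
    (hRpos : 0 < R) (hgcd : Nat.gcd R S = 1) (hinv : R' * R ≡ 1 [MOD S])
    (a : Fin (n + lam + 1) → Fin m → ℕ) (ha : ∀ i j, a i j < p) :
    ∀ x₀ < p, ∀ u : Fin m → ℕ, (∀ j, u j < p) →
      ((R' * ∑ j, ∑ i, ((R * a i j) % S) * ((x₀ ^ (i : ℕ) * u j) % p)) % S) % p =
        (∑ j, ∑ i, a i j * x₀ ^ (i : ℕ) * u j) % p := by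
  intro x₀ hx₀ u hu
  have hppos : 0 < p := by omega
  set T : ℕ := ∑ j, ∑ i, a i j * ((x₀ ^ (i : ℕ) * u j) % p) with hT
  -- T < S
  have hTlt : T < S := by
    have hbound : T ≤ m * ((n + lam + 1) * ((p - 1) * (p - 1))) := by
      calc T ≤ ∑ _j : Fin m, (n + lam + 1) * ((p - 1) * (p - 1)) := by
              apply Finset.sum_le_sum
              intro j _
              calc ∑ i, a i j * ((x₀ ^ (i : ℕ) * u j) % p)
                  ≤ ∑ _i : Fin (n + lam + 1), (p - 1) * (p - 1) := by
                    apply Finset.sum_le_sum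
                    intro i _
                    have h1 : a i j ≤ p - 1 := by have := ha i j; omega
                    have h2 : (x₀ ^ (i : ℕ) * u j) % p ≤ p - 1 := by
                      have := Nat.mod_lt (x₀ ^ (i : ℕ) * u j) hppos; omega
                    exact Nat.mul_le_mul h1 h2
                _ = (n + lam + 1) * ((p - 1) * (p - 1)) := by
                    simp [Finset.sum_const, Finset.card_univ]
        _ = m * ((n + lam + 1) * ((p - 1) * (p - 1))) := by
              simp [Finset.sum_const, Finset.card_univ]
    have hlt : (p - 1) * (p - 1) < p ^ 2 := by
      rw [pow_two]
      exact Nat.mul_lt_mul'' (by omega) (by omega)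
    have hfac : 0 < n + lam + 1 := by omega
    have : m * ((n + lam + 1) * ((p - 1) * (p - 1))) < m * ((n + lam + 1) * p ^ 2) := by
      have h2 : (n + lam + 1) * ((p - 1) * (p - 1)) < (n + lam + 1) * p ^ 2 :=
        Nat.mul_lt_mul_of_pos_left hlt hfac
      exact Nat.mul_lt_mul_of_pos_left h2 (by omega)
    calc T ≤ _ := hbound
      _ < m * ((n + lam + 1) * p ^ 2) := this
      _ = m * (n + lam + 1) * p ^ 2 := by ring
      _ < S := hS
  -- X % S = (R * T) % S
  have hX : (∑ j, ∑ i : Fin (n + lam + 1),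
      ((R * a i j) % S) * ((x₀ ^ (i : ℕ) * u j) % p)) % S = (R * T) % S := by
    have hRT : R * T = ∑ j, ∑ i : Fin (n + lam + 1),
        (R * a i j) * ((x₀ ^ (i : ℕ) * u j) % p) := by
      rw [hT, Finset.mul_sum]
      refine Finset.sum_congr rfl fun j _ => ?_
      rw [Finset.mul_sum]
      exact Finset.sum_congr rfl fun i _ => by ring
    rw [hRT]
    apply sum_mod_congr
    intro j _
    apply sum_mod_congr
    intro i _
    simp [Nat.mul_mod]
  -- (R' * X) % S = T
  have hdec : (R' * ∑ j, ∑ i : Fin (n + lam + 1),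
      ((R * a i j) % S) * ((x₀ ^ (i : ℕ) * u j) % p)) % S = T := by
    have h1 : (R' * ∑ j, ∑ i : Fin (n + lam + 1),
        ((R * a i j) % S) * ((x₀ ^ (i : ℕ) * u j) % p)) % S = (R' * (R * T)) % S := by
      rw [Nat.mul_mod, hX, ← Nat.mul_mod]
    have h2 : (R' * (R * T)) % S = T % S := by
      have := (hinv.mul_right T)
      simpa [mul_assoc, Nat.ModEq] using this
    rw [h1, h2, Nat.mod_eq_of_lt hTlt]
  rw [hdec]
  -- T % p = RHS % p
  apply sum_mod_congr
  intro j _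
  apply sum_mod_congr
  intro i _
  simp [Nat.mul_mod, mul_assoc]
end
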